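/- (Theorem 5, equivalent forms of the rate–detection region.) Fix an integer D ≥ 1 and reals π₁, π₂, α₁, α₂, β₁, β₂, γ₁, γ₂, θ₁, θ₂ ≥ 0 with θ₁ + θ₂ = 1, and set ᾱ = θ₁·α₁ + θ₂·α₂ and β̄ = θ₁·β₁ + θ₂·β₂. Define the subsets of ℝ²: S₂ = {(R, Pₑ) : there exists a probability vector p on Fin D with R ≤ R̄(p) and Pₑ ≥ P̲ₑ(p)}, and S₁ = {(R, Pₑ) : there exists a probability vector p on Fin D whose range has at most two elements, with R ≤ R̄(p) and Pₑ ≥ P̲ₑ(p)}. Then the convex hulls of S₁ and S₂ in ℝ² are equal: convexHull ℝ S₁ = convexHull ℝ S₂. -/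
import Mathlib

/-- `φ(x) = -x·log₂ x`, with the convention `0·log₂ 0 = 0`
(note `Real.logb 2 0 = 0` in Mathlib, so this convention holds definitionally). -/
noncomputable def phi (x : ℝ) : ℝ := -x * Real.logb 2 x

/-- The rate function `R̄(p)` for parameters `ᾱ = abar`, `β̄ = bbar`. -/
noncomputable def Rbar (D : ℕ) (abar bbar : ℝ) (p : Fin D → ℝ) : ℝ :=
  (∑ i, phi (abar * p i + bbar / D))
    + (abar + bbar / D) * Real.logb 2 (abar + bbar / D)
    + ((D : ℝ) - 1) * (bbar / D) * Real.logb 2 (bbar / D)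

/-- `f_s(x) = π_s·α_s·x + π_s·β_s/D` for a channel state `s`. -/
noncomputable def f (D : ℕ) (pis alphas betas : ℝ) (x : ℝ) : ℝ :=
  pis * alphas * x + pis * betas / D

/-- The detection function `P̲ₑ(p) = ∑ i, min(f₁(p i), f₂(p i)) + min(π₁γ₁, π₂γ₂)`. -/
noncomputable def Pe (D : ℕ) (pi1 pi2 alpha1 alpha2 beta1 beta2 gamma1 gamma2 : ℝ)
    (p : Fin D → ℝ) : ℝ :=
  (∑ i, min (f D pi1 alpha1 beta1 (p i)) (f D pi2 alpha2 beta2 (p i)))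
    + min (pi1 * gamma1) (pi2 * gamma2)

lemma phi_eq' (x : ℝ) : phi x = Real.negMulLog x / Real.log 2 := by
  simp [phi, Real.negMulLog, Real.logb]
  ring

lemma sum_affine' {ι : Type*} (s : Finset ι) (x : ι → ℝ) (c d : ℝ) :
    ∑ i ∈ s, (c * x i + d) = c * (∑ i ∈ s, x i) + (s.card : ℝ) * d := by
  rw [Finset.sum_add_distrib, ← Finset.mul_sum, Finset.sum_const, nsmul_eq_mul]

lemma avg_nonneg_of' {ι : Type*} (s : Finset ι) (hs : s.Nonempty) (x : ι → ℝ) (c d : ℝ)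
    (h : ∀ i ∈ s, 0 ≤ c * x i + d) : 0 ≤ c * ((∑ i ∈ s, x i) / s.card) + d := by
  have h1 : (0:ℝ) < s.card := by exact_mod_cast hs.card_pos
  have h2 : 0 ≤ ∑ i ∈ s, (c * x i + d) := Finset.sum_nonneg h
  rw [sum_affine'] at h2
  have h3 : c * ((∑ i ∈ s, x i) / s.card) + d
      = (c * (∑ i ∈ s, x i) + (s.card : ℝ) * d) / s.card := by
    field_simp
  rw [h3]
  exact div_nonneg h2 h1.le

lemma card_mul_avg' {ι : Type*} (s : Finset ι) (x : ι → ℝ) :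
    (s.card : ℝ) * ((∑ i ∈ s, x i) / s.card) = ∑ i ∈ s, x i := by
  rcases s.eq_empty_or_nonempty with rfl | hs
  · simp
  · rw [mul_div_cancel₀]
    exact_mod_cast hs.card_pos.ne'

lemma phi_jensen' {ι : Type*} (s : Finset ι) (x : ι → ℝ) (h : ∀ i ∈ s, 0 ≤ x i) :
    ∑ i ∈ s, phi (x i) ≤ (s.card : ℝ) * phi ((∑ i ∈ s, x i) / s.card) := by
  rcases s.eq_empty_or_nonempty with rfl | hs
  · simp [phi]
  have hc : (0:ℝ) < s.card := by exact_mod_cast hs.card_pos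
  have key := Real.concaveOn_negMulLog.le_map_sum (t := s)
    (w := fun _ => ((s.card : ℝ))⁻¹) (p := x)
    (fun i _ => by positivity)
    (by rw [Finset.sum_const, nsmul_eq_mul]; field_simp)
    (fun i hi => h i hi)
  simp only [smul_eq_mul, ← Finset.mul_sum] at key
  have key2 : ∑ i ∈ s, Real.negMulLog (x i)
      ≤ (s.card : ℝ) * Real.negMulLog ((∑ i ∈ s, x i) / s.card) := by
    have := mul_le_mul_of_nonneg_left key hc.le
    rw [← mul_assoc, mul_inv_cancel₀ hc.ne', one_mul] at this
    rw [div_eq_mul_inv, mul_comm (∑ i ∈ s, x i)]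
    exact this
  simp only [phi_eq']
  rw [← Finset.sum_div, ← mul_div_assoc]
  have hl : 0 < Real.log 2 := Real.log_pos one_lt_two
  exact div_le_div_of_nonneg_right key2 hl.le

/-- On a region where `f₁ ≤ f₂` pointwise, replacing all coordinates by their average
keeps the sum of mins unchanged (min is the affine function `f₁` there). -/
lemma region_min_eq' (D : ℕ) {ι : Type*} (s : Finset ι) (p : ι → ℝ) (p1 a1 b1 p2 a2 b2 : ℝ)
    (hle : ∀ i ∈ s, f D p1 a1 b1 (p i) ≤ f D p2 a2 b2 (p i)) :
    (s.card : ℝ) * min (f D p1 a1 b1 ((∑ i ∈ s, p i) / s.card))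
        (f D p2 a2 b2 ((∑ i ∈ s, p i) / s.card))
      = ∑ i ∈ s, min (f D p1 a1 b1 (p i)) (f D p2 a2 b2 (p i)) := by
  rcases s.eq_empty_or_nonempty with rfl | hs
  · simp
  have key : f D p1 a1 b1 ((∑ i ∈ s, p i) / s.card)
      ≤ f D p2 a2 b2 ((∑ i ∈ s, p i) / s.card) := by
    have h := avg_nonneg_of' s hs p (p2 * a2 - p1 * a1) (p2 * b2 / D - p1 * b1 / D)
      (fun i hi => by have := hle i hi; simp only [f] at this; nlinarith)
    simp only [f]
    nlinarith
  rw [min_eq_left key, Finset.sum_congr rfl (fun i hi => min_eq_left (hle i hi))]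
  simp only [f]
  rw [sum_affine' s p (p1 * a1) (p1 * b1 / D)]
  have h2 := card_mul_avg' s p
  linear_combination (p1 * a1) * h2

/-- Jensen for `φ` composed with a nonnegative affine map: averaging increases the sum. -/
lemma region_phi_le' {ι : Type*} (s : Finset ι) (p : ι → ℝ) (hp : ∀ i ∈ s, 0 ≤ p i)
    (c d : ℝ) (hc : 0 ≤ c) (hd : 0 ≤ d) :
    ∑ i ∈ s, phi (c * p i + d)
      ≤ (s.card : ℝ) * phi (c * ((∑ i ∈ s, p i) / s.card) + d) := by
  rcases s.eq_empty_or_nonempty with rfl | hs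
  · simp [phi]
  have hcard : (0:ℝ) < s.card := by exact_mod_cast hs.card_pos
  have key := phi_jensen' s (fun i => c * p i + d)
    (fun i hi => add_nonneg (mul_nonneg hc (hp i hi)) hd)
  have heq : (∑ i ∈ s, (c * p i + d)) / (s.card : ℝ)
      = c * ((∑ i ∈ s, p i) / s.card) + d := by
    rw [sum_affine']
    field_simp
  rwa [heq] at key

/-- Theorem 5 (equivalent forms): the convex hull of the region generated by probability
vectors taking at most two distinct values equals the convex hull of the region generated
by all probability vectors. -/
theorem stmt_11 (D : ℕ) (hD : 1 ≤ D)
    (pi1 pi2 alpha1 alpha2 beta1 beta2 gamma1 gamma2 theta1 theta2 : ℝ)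
    (hpi1 : 0 ≤ pi1) (hpi2 : 0 ≤ pi2) (halpha1 : 0 ≤ alpha1) (halpha2 : 0 ≤ alpha2)
    (hbeta1 : 0 ≤ beta1) (hbeta2 : 0 ≤ beta2) (hgamma1 : 0 ≤ gamma1) (hgamma2 : 0 ≤ gamma2)
    (htheta1 : 0 ≤ theta1) (htheta2 : 0 ≤ theta2) (hthetasum : theta1 + theta2 = 1)
    (abar bbar : ℝ)
    (habar : abar = theta1 * alpha1 + theta2 * alpha2)
    (hbbar : bbar = theta1 * beta1 + theta2 * beta2)
    (S1 S2 : Set (ℝ × ℝ))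
    (hS2 : S2 = {rp : ℝ × ℝ | ∃ p : Fin D → ℝ, (∀ i, 0 ≤ p i) ∧ (∑ i, p i = 1) ∧
      rp.1 ≤ Rbar D abar bbar p ∧
      rp.2 ≥ Pe D pi1 pi2 alpha1 alpha2 beta1 beta2 gamma1 gamma2 p})
    (hS1 : S1 = {rp : ℝ × ℝ | ∃ p : Fin D → ℝ, (∀ i, 0 ≤ p i) ∧ (∑ i, p i = 1) ∧
      (∃ v w : ℝ, ∀ i, p i = v ∨ p i = w) ∧
      rp.1 ≤ Rbar D abar bbar p ∧
      rp.2 ≥ Pe D pi1 pi2 alpha1 alpha2 beta1 beta2 gamma1 gamma2 p}) :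
    convexHull ℝ S1 = convexHull ℝ S2 := by
  classical
  have habar0 : 0 ≤ abar := by rw [habar]; positivity
  have hbbar0 : 0 ≤ bbar := by rw [hbbar]; positivity
  have hD0 : (0:ℝ) < D := by exact_mod_cast Nat.lt_of_lt_of_le Nat.zero_lt_one hD
  suffices hEq : S1 = S2 by rw [hEq]
  subst hS1 hS2
  apply Set.eq_of_subset_of_subset
  · rintro ⟨r, e⟩ ⟨p, h0, h1, _, hR, hP⟩
    exact ⟨p, h0, h1, hR, hP⟩
  · rintro ⟨r, e⟩ ⟨p, h0, h1, hR, hP⟩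
    set A : Finset (Fin D) :=
      Finset.univ.filter
        (fun i => f D pi1 alpha1 beta1 (p i) ≤ f D pi2 alpha2 beta2 (p i)) with hA
    set B : Finset (Fin D) :=
      Finset.univ.filter
        (fun i => ¬ f D pi1 alpha1 beta1 (p i) ≤ f D pi2 alpha2 beta2 (p i)) with hB
    set v : ℝ := (∑ i ∈ A, p i) / A.card with hv
    set w : ℝ := (∑ i ∈ B, p i) / B.card with hw
    set q : Fin D → ℝ :=
      (fun i => if f D pi1 alpha1 beta1 (p i) ≤ f D pi2 alpha2 beta2 (p i) then v else w)
      with hqdef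
    have hqA : ∀ i ∈ A, q i = v := by
      intro i hi
      rw [hqdef]
      exact if_pos (Finset.mem_filter.mp hi).2
    have hqB : ∀ i ∈ B, q i = w := by
      intro i hi
      rw [hqdef]
      exact if_neg (Finset.mem_filter.mp hi).2
    have hsplit : ∀ g : Fin D → ℝ, ∑ i, g i = ∑ i ∈ A, g i + ∑ i ∈ B, g i := by
      intro g
      exact (Finset.sum_filter_add_sum_filter_not Finset.univ _ g).symm
    have hsumAv : ∑ i ∈ A, v = ∑ i ∈ A, p i := by
      rw [Finset.sum_const, nsmul_eq_mul, hv, card_mul_avg']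
    have hsumBw : ∑ i ∈ B, w = ∑ i ∈ B, p i := by
      rw [Finset.sum_const, nsmul_eq_mul, hw, card_mul_avg']
    have hv0 : 0 ≤ v := div_nonneg
      (Finset.sum_nonneg fun i _ => h0 i) (Nat.cast_nonneg _)
    have hw0 : 0 ≤ w := div_nonneg
      (Finset.sum_nonneg fun i _ => h0 i) (Nat.cast_nonneg _)
    have h0q : ∀ i, 0 ≤ q i := by
      intro i
      rw [hqdef]
      dsimp only
      split <;> assumption
    have h1q : ∑ i, q i = 1 := by
      rw [hsplit q, Finset.sum_congr rfl hqA, Finset.sum_congr rfl hqB,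
        hsumAv, hsumBw, ← hsplit p, h1]
    have htwo : ∃ v' w' : ℝ, ∀ i, q i = v' ∨ q i = w' := by
      refine ⟨v, w, fun i => ?_⟩
      rw [hqdef]
      dsimp only
      split
      · exact Or.inl rfl
      · exact Or.inr rfl
    -- Pe is unchanged
    have hPe : Pe D pi1 pi2 alpha1 alpha2 beta1 beta2 gamma1 gamma2 q
        = Pe D pi1 pi2 alpha1 alpha2 beta1 beta2 gamma1 gamma2 p := by
      unfold Pe
      congr 1
      rw [hsplit (fun i => min (f D pi1 alpha1 beta1 (q i)) (f D pi2 alpha2 beta2 (q i))),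
        hsplit (fun i => min (f D pi1 alpha1 beta1 (p i)) (f D pi2 alpha2 beta2 (p i)))]
      congr 1
      · -- region A
        have hle : ∀ i ∈ A, f D pi1 alpha1 beta1 (p i) ≤ f D pi2 alpha2 beta2 (p i) :=
          fun i hi => (Finset.mem_filter.mp hi).2
        calc ∑ i ∈ A, min (f D pi1 alpha1 beta1 (q i)) (f D pi2 alpha2 beta2 (q i))
            = ∑ _i ∈ A, min (f D pi1 alpha1 beta1 v) (f D pi2 alpha2 beta2 v) := by
              refine Finset.sum_congr rfl fun i hi => ?_
              rw [hqA i hi]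
          _ = (A.card : ℝ) * min (f D pi1 alpha1 beta1 v) (f D pi2 alpha2 beta2 v) := by
              rw [Finset.sum_const, nsmul_eq_mul]
          _ = ∑ i ∈ A, min (f D pi1 alpha1 beta1 (p i)) (f D pi2 alpha2 beta2 (p i)) := by
              rw [hv]
              exact region_min_eq' D A p pi1 alpha1 beta1 pi2 alpha2 beta2 hle
      · -- region B
        have hle : ∀ i ∈ B, f D pi2 alpha2 beta2 (p i) ≤ f D pi1 alpha1 beta1 (p i) :=
          fun i hi => (lt_of_not_ge (Finset.mem_filter.mp hi).2).le
        calc ∑ i ∈ B, min (f D pi1 alpha1 beta1 (q i)) (f D pi2 alpha2 beta2 (q i))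
            = ∑ _i ∈ B, min (f D pi2 alpha2 beta2 w) (f D pi1 alpha1 beta1 w) := by
              refine Finset.sum_congr rfl fun i hi => ?_
              rw [hqB i hi, min_comm]
          _ = (B.card : ℝ) * min (f D pi2 alpha2 beta2 w) (f D pi1 alpha1 beta1 w) := by
              rw [Finset.sum_const, nsmul_eq_mul]
          _ = ∑ i ∈ B, min (f D pi2 alpha2 beta2 (p i)) (f D pi1 alpha1 beta1 (p i)) := by
              rw [hw]
              exact region_min_eq' D B p pi2 alpha2 beta2 pi1 alpha1 beta1 hle
          _ = ∑ i ∈ B, min (f D pi1 alpha1 beta1 (p i)) (f D pi2 alpha2 beta2 (p i)) := by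
              refine Finset.sum_congr rfl fun i hi => ?_
              rw [min_comm]
    -- Rbar increases
    have hRb : Rbar D abar bbar p ≤ Rbar D abar bbar q := by
      unfold Rbar
      have hsum : ∑ i, phi (abar * p i + bbar / D) ≤ ∑ i, phi (abar * q i + bbar / D) := by
        rw [hsplit (fun i => phi (abar * p i + bbar / D)),
          hsplit (fun i => phi (abar * q i + bbar / D))]
        have hdnn : 0 ≤ bbar / (D : ℝ) := div_nonneg hbbar0 hD0.le
        have hApart : ∑ i ∈ A, phi (abar * p i + bbar / D)
            ≤ ∑ i ∈ A, phi (abar * q i + bbar / D) := by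
          have := region_phi_le' A p (fun i _ => h0 i) abar (bbar / D) habar0 hdnn
          calc ∑ i ∈ A, phi (abar * p i + bbar / D)
              ≤ (A.card : ℝ) * phi (abar * ((∑ i ∈ A, p i) / A.card) + bbar / D) := this
            _ = ∑ _i ∈ A, phi (abar * v + bbar / D) := by
                rw [Finset.sum_const, nsmul_eq_mul, hv]
            _ = ∑ i ∈ A, phi (abar * q i + bbar / D) := by
                refine Finset.sum_congr rfl fun i hi => ?_
                rw [hqA i hi]
        have hBpart : ∑ i ∈ B, phi (abar * p i + bbar / D)
            ≤ ∑ i ∈ B, phi (abar * q i + bbar / D) := by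
          have := region_phi_le' B p (fun i _ => h0 i) abar (bbar / D) habar0 hdnn
          calc ∑ i ∈ B, phi (abar * p i + bbar / D)
              ≤ (B.card : ℝ) * phi (abar * ((∑ i ∈ B, p i) / B.card) + bbar / D) := this
            _ = ∑ _i ∈ B, phi (abar * w + bbar / D) := by
                rw [Finset.sum_const, nsmul_eq_mul, hw]
            _ = ∑ i ∈ B, phi (abar * q i + bbar / D) := by
                refine Finset.sum_congr rfl fun i hi => ?_
                rw [hqB i hi]
        exact add_le_add hApart hBpart
      linarith
    exact ⟨q, h0q, h1q, htwo, hR.trans hRb, by rw [hPe]; exact hP⟩
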